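/- arXiv:1504.01459 — 3 statements merged into one kernel-verified Lean document; each statement's English description precedes it below -/
import Mathlib

section
/- Let N and i be positive integers with i ≤ N, and let j_max be the largest j with 1 ≤ j ≤ N such that i · 2^⌊log₂(j/i)⌋ ≤ j < (i+1) · 2^⌊log₂(j/i)⌋. Then ⌊log₂(j_max / i)⌋ = ⌊log₂(N/i)⌋. -/
theorem stmt4 (N i jmax : ℕ) (hi : 0 < i) (hiN : i ≤ N)
    (h1 : 1 ≤ jmax) (h2 : jmax ≤ N)
    (h3 : (i : ℝ) * 2 ^ ⌊Real.logb 2 ((jmax : ℝ) / (i : ℝ))⌋ ≤ (jmax : ℝ) ∧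
          (jmax : ℝ) < ((i : ℝ) + 1) * 2 ^ ⌊Real.logb 2 ((jmax : ℝ) / (i : ℝ))⌋)
    (h4 : ∀ j : ℕ, 1 ≤ j → j ≤ N →
        ((i : ℝ) * 2 ^ ⌊Real.logb 2 ((j : ℝ) / (i : ℝ))⌋ ≤ (j : ℝ) ∧
          (j : ℝ) < ((i : ℝ) + 1) * 2 ^ ⌊Real.logb 2 ((j : ℝ) / (i : ℝ))⌋) → j ≤ jmax) :
    ⌊Real.logb 2 ((jmax : ℝ) / (i : ℝ))⌋ = ⌊Real.logb 2 ((N : ℝ) / (i : ℝ))⌋ := by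
  have hi' : (0:ℝ) < i := by exact_mod_cast hi
  have hN' : (0:ℝ) < N := by exact_mod_cast hi.trans_le hiN
  have hx1 : (1:ℝ) ≤ (N:ℝ) / i := by
    rw [le_div_iff₀ hi']; simpa using (Nat.cast_le.mpr hiN : (i:ℝ) ≤ N)
  set K := ⌊Real.logb 2 ((N : ℝ) / (i : ℝ))⌋ with hKdef
  have hK0 : 0 ≤ K := Int.floor_nonneg.mpr (Real.logb_nonneg one_lt_two hx1)
  set j : ℕ := i * 2 ^ K.toNat with hjdef
  have hjcast : (j:ℝ) = (i:ℝ) * (2:ℝ) ^ (K:ℤ) := by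
    rw [hjdef]
    push_cast
    rw [← zpow_natCast, Int.toNat_of_nonneg hK0]
  have hji : (j:ℝ) / i = (2:ℝ) ^ (K:ℤ) := by
    rw [hjcast]; field_simp
  have hlogbK : Real.logb 2 ((2:ℝ) ^ (K:ℤ)) = (K:ℝ) := by
    rw [← Real.rpow_intCast 2 K, Real.logb_rpow (by norm_num) (by norm_num)]
  have hlogj : Real.logb 2 ((j:ℝ) / i) = K := by rw [hji, hlogbK]
  have hfloorj : ⌊Real.logb 2 ((j:ℝ) / i)⌋ = K := by
    rw [hlogj]; exact Int.floor_intCast K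
  have h2Kle : (2:ℝ) ^ (K:ℤ) ≤ (N:ℝ) / i := by
    have h1 : (2:ℝ) ^ (K:ℤ) = (2:ℝ) ^ ((K:ℤ):ℝ) := (Real.rpow_intCast 2 K).symm
    have h2 : (2:ℝ) ^ ((K:ℤ):ℝ) ≤ (2:ℝ) ^ (Real.logb 2 ((N:ℝ)/i)) :=
      Real.rpow_le_rpow_of_exponent_le one_le_two (Int.floor_le _)
    rw [h1]
    calc (2:ℝ) ^ ((K:ℤ):ℝ) ≤ (2:ℝ) ^ (Real.logb 2 ((N:ℝ)/i)) := h2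
      _ = (N:ℝ)/i := Real.rpow_logb (by norm_num) (by norm_num) (by positivity)
  have hjN : j ≤ N := by
    have : (j:ℝ) ≤ N := by
      rw [hjcast]
      calc (i:ℝ) * (2:ℝ) ^ (K:ℤ) ≤ (i:ℝ) * ((N:ℝ)/i) :=
            mul_le_mul_of_nonneg_left h2Kle (le_of_lt hi')
        _ = N := by field_simp
    exact_mod_cast this
  have hj1 : 1 ≤ j := Nat.one_le_iff_ne_zero.mpr (by positivity)
  have hjle : j ≤ jmax := by
    apply h4 j hj1 hjN
    constructor
    · rw [hfloorj, hjcast]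
    · rw [hfloorj, hjcast]
      have h2K : (0:ℝ) < (2:ℝ) ^ (K:ℤ) := by positivity
      nlinarith
  -- upper bound
  have hupper : ⌊Real.logb 2 ((jmax : ℝ) / i)⌋ ≤ K := by
    apply Int.floor_le_floor
    apply Real.logb_le_logb_of_le one_lt_two (by positivity)
    gcongr
  have hlower : K ≤ ⌊Real.logb 2 ((jmax : ℝ) / i)⌋ := by
    rw [Int.le_floor]
    have hy : (2:ℝ) ^ (K:ℤ) ≤ (jmax:ℝ) / i := by
      rw [← hji]
      gcongr
    calc ((K:ℤ):ℝ) = Real.logb 2 ((2:ℝ) ^ (K:ℤ)) := hlogbK.symm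
      _ ≤ Real.logb 2 ((jmax:ℝ)/i) := Real.logb_le_logb_of_le one_lt_two (by positivity) hy
  omega
end

section
/- For every integer N ≥ 2, 2·s₂(N) + e₂(N) ≤ 2·log₂(N - 2^⌊log₂(N-1)⌋ + 1) + 2. -/
/-!
Write `N = 2^k + m` with `k = ⌊log₂(N-1)⌋`, so that `1 ≤ m ≤ 2^k`; the case `m = 2^k`, where `N` is
a power of two, is a direct check. For `m < 2^k` the leading bit adds one to the digit sum and
nothing to the 2-adic valuation, so it suffices to show `2^(2 s₂(m) + e₂(m)) ≤ (m+1)^2` for every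
`m`. This follows by induction on the binary expansion: appending a `0` raises the left side by a
factor `2` and the right side by at least that much, and appending a `1` raises the left side by a
factor at most `4` and the right side by exactly `4`.
-/

lemma Nat.digits_two_sum_two_mul (n : ℕ) :
    (Nat.digits 2 (2 * n)).sum = (Nat.digits 2 n).sum := by
  rcases Nat.eq_zero_or_pos n with rfl | hn
  · simp
  rw [Nat.digits_def' one_lt_two (by omega)]
  simp

lemma Nat.digits_two_sum_two_mul_add_one (n : ℕ) :
    (Nat.digits 2 (2 * n + 1)).sum = (Nat.digits 2 n).sum + 1 := by
  rw [Nat.digits_def' one_lt_two (by omega)]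
  simp only [Nat.mul_add_mod, Nat.mul_add_div two_pos, List.sum_cons]
  norm_num [add_comm]

lemma Nat.digits_two_sum_two_pow_add {k m : ℕ} (hm : m < 2 ^ k) :
    (Nat.digits 2 (2 ^ k + m)).sum = (Nat.digits 2 m).sum + 1 := by
  have hlen : (Nat.digits 2 m).length ≤ k := (Nat.digits_length_le_iff one_lt_two m).2 hm
  have h := Nat.digits_append_zeroes_append_digits (b := 2) (k := k - (Nat.digits 2 m).length)
    (m := 1) (n := m) one_lt_two one_pos
  rw [Nat.add_sub_cancel' hlen, mul_one, add_comm m] at h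
  rw [← h]
  simp

lemma padicValNat_two_pow_add {k m : ℕ} (hm₀ : m ≠ 0) (hm : m < 2 ^ k) :
    padicValNat 2 (2 ^ k + m) = padicValNat 2 m := by
  have hv : padicValNat 2 m < k :=
    (Nat.pow_lt_pow_iff_right one_lt_two).1 <|
      (Nat.le_of_dvd (Nat.pos_of_ne_zero hm₀) pow_padicValNat_dvd).trans_lt hm
  have h := padicValRat.add_eq_of_lt (p := 2) (q := ((m : ℕ) : ℚ)) (r := ((2 ^ k : ℕ) : ℚ))
    (by positivity) (by exact_mod_cast hm₀) (by positivity) (by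
      simpa only [padicValRat.of_nat, padicValNat.prime_pow, Nat.cast_lt] using hv)
  rw [← Nat.cast_add, add_comm, padicValRat.of_nat, padicValRat.of_nat] at h
  exact_mod_cast h

lemma two_pow_two_mul_digits_sum_add_padicValNat_le (m : ℕ) :
    2 ^ (2 * (Nat.digits 2 m).sum + padicValNat 2 m) ≤ (m + 1) ^ 2 := by
  induction m using Nat.strong_induction_on with
  | _ m ih =>
  obtain ⟨j, rfl | rfl⟩ := Nat.even_or_odd' m
  · rcases Nat.eq_zero_or_pos j with rfl | hj
    · simp
    have ih_j := ih j (by omega)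
    rw [Nat.digits_two_sum_two_mul, padicValNat.mul two_ne_zero hj.ne',
      padicValNat.self one_lt_two]
    calc 2 ^ (2 * (Nat.digits 2 j).sum + (1 + padicValNat 2 j))
        = 2 * 2 ^ (2 * (Nat.digits 2 j).sum + padicValNat 2 j) := by ring
      _ ≤ 2 * (j + 1) ^ 2 := by omega
      _ ≤ (2 * j + 1) ^ 2 := by nlinarith
  · have hj : 2 ^ (2 * (Nat.digits 2 j).sum) ≤ (j + 1) ^ 2 :=
      (Nat.pow_le_pow_right two_pos (Nat.le_add_right _ _)).trans (ih j (by omega))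
    rw [Nat.digits_two_sum_two_mul_add_one, padicValNat.eq_zero_of_not_dvd (by omega)]
    calc 2 ^ (2 * ((Nat.digits 2 j).sum + 1) + 0)
        = 4 * 2 ^ (2 * (Nat.digits 2 j).sum) := by ring
      _ ≤ 4 * (j + 1) ^ 2 := by omega
      _ = (2 * j + 1 + 1) ^ 2 := by ring

lemma two_pow_two_mul_digits_sum_add_padicValNat_two_pow_add_le {k m : ℕ} (hm₀ : 0 < m)
    (hm : m ≤ 2 ^ k) :
    2 ^ (2 * (Nat.digits 2 (2 ^ k + m)).sum + padicValNat 2 (2 ^ k + m)) ≤ 4 * (m + 1) ^ 2 := by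
  rcases hm.lt_or_eq with hm | rfl
  · rw [Nat.digits_two_sum_two_pow_add hm, padicValNat_two_pow_add hm₀.ne' hm]
    calc 2 ^ (2 * ((Nat.digits 2 m).sum + 1) + padicValNat 2 m)
        = 4 * 2 ^ (2 * (Nat.digits 2 m).sum + padicValNat 2 m) := by ring
      _ ≤ 4 * (m + 1) ^ 2 := by
        have := two_pow_two_mul_digits_sum_add_padicValNat_le m
        omega
  · have hs : (Nat.digits 2 (2 ^ (k + 1))).sum = 1 := by
      simpa using Nat.digits_two_sum_two_pow_add (k := k + 1) (m := 0) (by positivity)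
    rw [← two_mul, ← pow_succ', hs, padicValNat.prime_pow]
    calc 2 ^ (2 * 1 + (k + 1)) = 8 * 2 ^ k := by ring
      _ ≤ 4 * (2 ^ k + 1) ^ 2 := by nlinarith

lemma natCast_le_two_mul_logb_add_two {L : ℕ} {x : ℝ} (hx : 0 < x) (h : (2 : ℝ) ^ L ≤ 4 * x ^ 2) :
    (L : ℝ) ≤ 2 * Real.logb 2 x + 2 := by
  have h4 : Real.logb 2 4 = 2 := by
    rw [show (4 : ℝ) = 2 ^ (2 : ℝ) by norm_num, Real.logb_rpow two_pos (by norm_num)]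
  calc (L : ℝ) ≤ Real.logb 2 (4 * x ^ 2) :=
        (Real.le_logb_iff_rpow_le one_lt_two (by positivity)).2 (by exact_mod_cast h)
    _ = 2 * Real.logb 2 x + 2 := by
        rw [Real.logb_mul (by norm_num) (by positivity), Real.logb_pow, h4]
        ring

lemma floor_logb_two_natCast_toNat (n : ℕ) : ⌊Real.logb 2 (n : ℝ)⌋.toNat = Nat.log 2 n := by
  rw [show (2 : ℝ) = ((2 : ℕ) : ℝ) by norm_num, Real.floor_logb_natCast (Nat.cast_nonneg _),
    Int.log_natCast, Int.toNat_natCast]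

theorem stmt15 (N : ℕ) (hN : 2 ≤ N) :
    ((2 * (Nat.digits 2 N).sum + padicValNat 2 N : ℕ) : ℝ) ≤
      2 * Real.logb 2 ((N : ℝ) - 2 ^ (⌊Real.logb 2 ((N : ℝ) - 1)⌋.toNat) + 1) + 2 := by
  have hk : ⌊Real.logb 2 ((N : ℝ) - 1)⌋.toNat = Nat.log 2 (N - 1) := by
    rw [← floor_logb_two_natCast_toNat, Nat.cast_sub (by omega), Nat.cast_one]
  have hk_le : 2 ^ Nat.log 2 (N - 1) ≤ N - 1 := Nat.pow_log_le_self 2 (by omega)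
  have hk_lt : N - 1 < 2 ^ (Nat.log 2 (N - 1) + 1) := Nat.lt_pow_succ_log_self one_lt_two _
  rw [hk]
  generalize Nat.log 2 (N - 1) = k at hk_le hk_lt ⊢
  obtain ⟨m, rfl⟩ : ∃ m, N = 2 ^ k + m := ⟨N - 2 ^ k, by omega⟩
  have hbound := two_pow_two_mul_digits_sum_add_padicValNat_two_pow_add_le
    (k := k) (m := m) (by omega) (by rw [pow_succ] at hk_lt; omega)
  have hm : ((2 ^ k + m : ℕ) : ℝ) - 2 ^ k + 1 = m + 1 := by push_cast; ring
  rw [hm]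
  exact natCast_le_two_mul_logb_add_two (by positivity) (by exact_mod_cast hbound)
end

section
/- For a real number m ≥ 3 that is an integer, the sum over i from 2 to m-1 of (⌊log₂ i⌋ + ⌊log₂(i-1)⌋) equals 2·(sum over i from 2 to m-1 of ⌊log₂ i⌋) - ⌊log₂(m-1)⌋, and this equals (2m-1)·⌊log₂(m-1)⌋ - 2^(⌊log₂(m-1)⌋+2) + 4. -/
/-! Since `⌊log₂ i⌋ = Nat.log 2 i` for natural `i`, the sum with `⌊log₂ (i - 1)⌋` is the same sum
shifted by one index, which gives the first identity. For the closed form, `Nat.log 2` increases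
(by one) from `k` to `k + 1` exactly when `k + 1` is a power of two, and induction on `n` gives
`∑_{i ≤ n} ⌊log₂ i⌋ = (n + 1)⌊log₂ n⌋ - 2^(⌊log₂ n⌋ + 1) + 2`. -/

open Finset

theorem Real.floor_logb_natCast_eq_natLog (b n : ℕ) : ⌊Real.logb b n⌋ = Nat.log b n := by
  rw [Real.floor_logb_natCast n.cast_nonneg, Int.log_natCast]

theorem Nat.log_succ_eq_or_succ_eq_pow {b : ℕ} (hb : 1 < b) (k : ℕ) :
    Nat.log b (k + 1) = Nat.log b k ∨ k + 1 = b ^ (Nat.log b k + 1) := by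
  rcases Nat.lt_or_eq_of_le (Nat.lt_pow_succ_log_self hb k) with h | h
  · left
    rcases k.eq_zero_or_pos with rfl | hk
    · simp
    exact Nat.log_eq_of_pow_le_of_lt_pow ((Nat.pow_log_le_self b hk.ne').trans k.le_succ) h
  · exact .inr h

theorem sum_range_natLog_two (n : ℕ) :
    ∑ i ∈ range (n + 1), (Nat.log 2 i : ℤ) =
      (n + 1) * Nat.log 2 n - 2 ^ (Nat.log 2 n + 1) + 2 := by
  induction n with
  | zero => simp
  | succ k ih =>
    rw [sum_range_succ, ih]
    rcases Nat.log_succ_eq_or_succ_eq_pow one_lt_two k with h | h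
    · rw [h]; push_cast; ring
    · have hz : (k : ℤ) + 1 = 2 ^ (Nat.log 2 k + 1) := by exact_mod_cast h
      rw [h, Nat.log_pow one_lt_two, ← h]
      push_cast
      linear_combination -hz

theorem Finset.sum_Icc_two_eq_sum_range {M : Type*} [AddCommMonoid M] {f : ℕ → M}
    (h0 : f 0 = 0) (h1 : f 1 = 0) (n : ℕ) : ∑ i ∈ Icc 2 n, f i = ∑ i ∈ range (n + 1), f i := by
  refine sum_subset (fun i hi ↦ by simp at hi ⊢; omega) fun i hi hi' ↦ ?_
  obtain rfl | rfl : i = 0 ∨ i = 1 := by simp at hi hi'; omega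
  exacts [h0, h1]

theorem stmt17_general (m : ℕ) :
    (∑ i ∈ Finset.Icc 2 (m - 1),
        (⌊Real.logb 2 (i : ℝ)⌋ + ⌊Real.logb 2 ((i : ℝ) - 1)⌋)) =
      2 * (∑ i ∈ Finset.Icc 2 (m - 1), ⌊Real.logb 2 (i : ℝ)⌋) -
        ⌊Real.logb 2 ((m : ℝ) - 1)⌋ ∧
    (∑ i ∈ Finset.Icc 2 (m - 1),
        (⌊Real.logb 2 (i : ℝ)⌋ + ⌊Real.logb 2 ((i : ℝ) - 1)⌋)) =
      (2 * (m : ℤ) - 1) * ⌊Real.logb 2 ((m : ℝ) - 1)⌋ -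
        2 ^ ((⌊Real.logb 2 ((m : ℝ) - 1)⌋ + 2).toNat) + 4 := by
  rcases m with _ | n
  · simp -- `Real.logb 2 (-1) = 0`
  have floor_log (i : ℕ) : ⌊Real.logb 2 (i : ℝ)⌋ = Nat.log 2 i := by
    exact_mod_cast Real.floor_logb_natCast_eq_natLog 2 i
  have floor_log_pred (i : ℕ) : ⌊Real.logb 2 ((i : ℝ) - 1)⌋ = Nat.log 2 (i - 1) := by
    rcases i with _ | i
    · simp
    · simp [floor_log]
  have sum_log := sum_Icc_two_eq_sum_range (f := fun i ↦ (Nat.log 2 i : ℤ)) (by simp) (by simp) n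
  have sum_log_pred :=
    sum_Icc_two_eq_sum_range (f := fun i ↦ (Nat.log 2 (i - 1) : ℤ)) (by simp) (by simp) n
  simp only [sum_range_succ', Nat.add_sub_cancel, zero_tsub, Nat.log_zero_right, Nat.cast_zero,
    add_zero] at sum_log_pred
  simp only [floor_log, floor_log_pred, Nat.cast_add_one, add_sub_cancel_right, Nat.add_sub_cancel,
    sum_add_distrib, sum_log, sum_log_pred]
  have sum_succ := sum_range_succ (fun i ↦ (Nat.log 2 i : ℤ)) n
  have closed_form := sum_range_natLog_two n
  have two_pow_exponent : ((Nat.log 2 n : ℤ) + 2).toNat = Nat.log 2 n + 2 := by omega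
  rw [two_pow_exponent]
  constructor
  · linear_combination -sum_succ
  · linear_combination -sum_succ + 2 * closed_form

theorem stmt17 (m : ℕ) (hm : 3 ≤ m) :
    (∑ i ∈ Finset.Icc 2 (m - 1),
        (⌊Real.logb 2 (i : ℝ)⌋ + ⌊Real.logb 2 ((i : ℝ) - 1)⌋)) =
      2 * (∑ i ∈ Finset.Icc 2 (m - 1), ⌊Real.logb 2 (i : ℝ)⌋) -
        ⌊Real.logb 2 ((m : ℝ) - 1)⌋ ∧
    (∑ i ∈ Finset.Icc 2 (m - 1),
        (⌊Real.logb 2 (i : ℝ)⌋ + ⌊Real.logb 2 ((i : ℝ) - 1)⌋)) =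
      (2 * (m : ℤ) - 1) * ⌊Real.logb 2 ((m : ℝ) - 1)⌋ -
        2 ^ ((⌊Real.logb 2 ((m : ℝ) - 1)⌋ + 2).toNat) + 4 :=
  stmt17_general m
end
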